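/- arXiv:1103.4485 — 2 statements merged into one kernel-verified Lean document; each statement's English description precedes it below -/
import Mathlib

section
/- For a bisimplicial set S, the family of sets W̄S_p = {(t_{0,p},...,t_{p,0}) ∈ ∏_{m=0}^p S_{m,p-m} | d^v_0 t_{m,p-m} = d^h_{m+1} t_{m+1,p-m-1} for 0 ≤ m < p}, equipped with faces d_i(t_{0,p},...,t_{p,0}) = (d_i^v t_{0,p},...,d_i^v t_{i-1,p-i+1}, d_i^h t_{i+1,p-i-1},...,d_i^h t_{p,0}) and degeneracies s_i(t_{0,p},...,t_{p,0}) = (s_i^v t_{0,p},...,s_0^v t_{i,p-i}, s_i^h t_{i,p-i},...,s_i^h t_{p,0}), forms a simplicial set (the codiagonal or total complex W̄S). -/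
/-
The simplicial operator `α : [m] ⟶ [n]` acts on `t ∈ W̄S_n` entrywise: the `j`-th entry of
`α* t` is `t_{α j}`, acted on horizontally by `α` restricted to `[0, j]` and vertically by `α`
restricted to `[j, m]` (translated to start at `0`). Functoriality in `α` follows from
functoriality of `S` in each direction together with the commutation of horizontal and vertical
operators. That `α* t` again satisfies the matching conditions rests on iterating them:
`(d₀^v)^(k'-k) t_k` is the restriction of `t_{k'}` along the inclusion `[k] ⊆ [k']`.
For `α = δ_i` and `α = σ_i` the entrywise formula specialises to the stated faces and degeneracies.
-/

open CategoryTheory Opposite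

/-- A bisimplicial set (curried form): horizontal index outside, vertical inside. -/
abbrev BiSSet := SimplexCategoryᵒᵖ ⥤ SSet.{0}

namespace BiSSet

variable (S : BiSSet)

/-- The set `S_{p,q}` of `(p,q)`-simplices. -/
def obj2 (p q : ℕ) : Type :=
  (S.obj (op (SimplexCategory.mk p))).obj (op (SimplexCategory.mk q))

/-- The morphism `[m] ⟶ [n]` of the simplex category associated with a monotone
function `f : ℕ → ℕ` (values truncated at `n`). -/
def arr (m n : ℕ) (f : ℕ → ℕ) (hf : Monotone f) :
    SimplexCategory.mk m ⟶ SimplexCategory.mk n :=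
  SimplexCategory.mkHom ⟨fun a => ⟨min (f a.val) n, by omega⟩, fun a b hab => by
    have : f a.val ≤ f b.val := hf hab
    simp only [Fin.mk_le_mk]
    omega⟩

/-- Horizontal action of a simplicial operator. -/
def hAct {p p' q : ℕ} (f : SimplexCategory.mk p' ⟶ SimplexCategory.mk p) :
    S.obj2 p q → S.obj2 p' q := fun t => (S.map f.op).app _ t

/-- Vertical action of a simplicial operator. -/
def vAct {p q q' : ℕ} (f : SimplexCategory.mk q' ⟶ SimplexCategory.mk q) :
    S.obj2 p q → S.obj2 p q' := fun t => (S.obj _).map f.op t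

/-- The monotone function underlying the `i`-th coface. -/
def fc (i : ℕ) : ℕ → ℕ := fun a => if a < i then a else a + 1

/-- The monotone function underlying the `i`-th codegeneracy. -/
def dgm (i : ℕ) : ℕ → ℕ := fun a => if a ≤ i then a else a - 1

lemma fc_mono (i : ℕ) : Monotone (fc i) := fun a b h => by
  simp only [fc]; split <;> split <;> omega

lemma dgm_mono (i : ℕ) : Monotone (dgm i) := fun a b h => by
  simp only [dgm]; split <;> split <;> omega

/-- `i`-th horizontal face operator `d_i^h` (with flexible dimensions). -/
def dh (i : ℕ) {p' p q : ℕ} : S.obj2 p q → S.obj2 p' q :=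
  S.hAct (arr p' p (fc i) (fc_mono i))

/-- `i`-th vertical face operator `d_i^v` (with flexible dimensions). -/
def dv (i : ℕ) {p q' q : ℕ} : S.obj2 p q → S.obj2 p q' :=
  S.vAct (arr q' q (fc i) (fc_mono i))

/-- `i`-th horizontal degeneracy operator `s_i^h` (with flexible dimensions). -/
def sh (i : ℕ) {p' p q : ℕ} : S.obj2 p q → S.obj2 p' q :=
  S.hAct (arr p' p (dgm i) (dgm_mono i))

/-- `i`-th vertical degeneracy operator `s_i^v` (with flexible dimensions). -/
def sv (i : ℕ) {p q' q : ℕ} : S.obj2 p q → S.obj2 p q' :=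
  S.vAct (arr q' q (dgm i) (dgm_mono i))

/-- Transport of simplices along equalities of the dimensions. -/
def ocast {p q p' q' : ℕ} (hp : p = p') (hq : q = q') : S.obj2 p q → S.obj2 p' q' := by
  subst hp; subst hq; exact id

/-- The set of `p`-simplices of the codiagonal `W̄S`:
tuples `(t_{0,p}, …, t_{p,0}) ∈ ∏ₘ S_{m,p-m}` with
`d₀^v t_{m,p-m} = d_{m+1}^h t_{m+1,p-m-1}` for `0 ≤ m < p`. -/
def Wbar (p : ℕ) : Type :=
  { t : ∀ m : Fin (p + 1), S.obj2 m.val (p - m.val) //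
    ∀ m : Fin p, S.dv 0 (t m.castSucc) = S.dh (m.val + 1) (t m.succ) }

/-- The `i`-th face of a `(p+1)`-simplex of `W̄S`:
`d_i (t_{0,p+1}, …, t_{p+1,0}) = (d_i^v t_{0,p+1}, …, d_i^v t_{i-1,p-i+2},
d_i^h t_{i+1,p-i}, …, d_i^h t_{p+1,0})` (vertical operators suitably indexed). -/
def wFaceTuple {p : ℕ} (i : ℕ) (t : S.Wbar (p + 1)) (m : Fin (p + 1)) :
    S.obj2 m.val (p - m.val) :=
  if h : m.val < i then S.dv (i - m.val) (t.1 ⟨m.val, by omega⟩)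
  else S.ocast rfl (show p + 1 - (m.val + 1) = p - m.val by omega)
    (S.dh i (t.1 ⟨m.val + 1, by omega⟩))

/-- The `i`-th degeneracy of a `p`-simplex of `W̄S`:
`s_i (t_{0,p}, …, t_{p,0}) = (s_i^v t_{0,p}, …, s_0^v t_{i,p-i},
s_i^h t_{i,p-i}, …, s_i^h t_{p,0})` (vertical operators suitably indexed). -/
def wDegTuple {p : ℕ} (i : ℕ) (hi : i ≤ p) (t : S.Wbar p) (m : Fin (p + 2)) :
    S.obj2 m.val (p + 1 - m.val) :=
  if h : m.val ≤ i then S.sv (i - m.val) (t.1 ⟨m.val, by omega⟩)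
  else S.ocast rfl (show p - (m.val - 1) = p + 1 - m.val by omega)
    (S.sh i (t.1 ⟨m.val - 1, by omega⟩))

end BiSSet

namespace BiSSet

open Simplicial

lemma hom_ext_val {m n : ℕ} {f g : ⦋m⦌ ⟶ ⦋n⦌}
    (h : ∀ i : Fin (m + 1), (f.toOrderHom i).val = (g.toOrderHom i).val) : f = g :=
  SimplexCategory.Hom.ext _ _ (OrderHom.ext _ _ (funext fun i => Fin.ext (h i)))

@[simp]
lemma comp_apply_val {a b c : ℕ} (f : ⦋a⦌ ⟶ ⦋b⦌) (g : ⦋b⦌ ⟶ ⦋c⦌) (i : Fin (a + 1)) :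
    ((f ≫ g).toOrderHom i).val = (g.toOrderHom (f.toOrderHom i)).val :=
  rfl

@[simp]
lemma arr_apply_val {m n : ℕ} (f : ℕ → ℕ) (hf : Monotone f) (i : Fin (m + 1)) :
    ((arr m n f hf).toOrderHom i).val = min (f i.val) n :=
  rfl

def incl (k k' : ℕ) : ⦋k⦌ ⟶ ⦋k'⦌ :=
  arr k k' id monotone_id

def shift (d q' q : ℕ) : ⦋q'⦌ ⟶ ⦋q⦌ :=
  arr q' q (· + d) fun ⦃_ _⦄ h => Nat.add_le_add_right h d

@[simp]
lemma incl_apply_val {k k' : ℕ} (i : Fin (k + 1)) : ((incl k k').toOrderHom i).val = min i.val k' :=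
  rfl

@[simp]
lemma shift_apply_val {d q' q : ℕ} (i : Fin (q' + 1)) :
    ((shift d q' q).toOrderHom i).val = min (i.val + d) q :=
  rfl

/-- `α` as a function `ℕ → ℕ`, constant beyond the last vertex. -/
def natFun {m n : ℕ} (α : ⦋m⦌ ⟶ ⦋n⦌) (a : ℕ) : ℕ :=
  (α.toOrderHom ⟨min a m, Nat.lt_succ_of_le (min_le_right a m)⟩).val

lemma natFun_le {m n : ℕ} (α : ⦋m⦌ ⟶ ⦋n⦌) (a : ℕ) : natFun α a ≤ n :=
  Nat.le_of_lt_succ (Fin.isLt _)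

lemma natFun_mono {m n : ℕ} (α : ⦋m⦌ ⟶ ⦋n⦌) : Monotone (natFun α) := fun _ _ h =>
  α.toOrderHom.monotone (Fin.mk_le_mk.2 (min_le_min_right m h))

lemma natFun_of_le {m n : ℕ} (α : ⦋m⦌ ⟶ ⦋n⦌) {a : ℕ} (ha : a ≤ m) :
    natFun α a = (α.toOrderHom ⟨a, Nat.lt_succ_of_le ha⟩).val := by
  simp only [natFun, min_eq_left ha]

lemma natFun_id {n a : ℕ} (ha : a ≤ n) : natFun (𝟙 ⦋n⦌) a = a := by
  simp [natFun_of_le _ ha]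

lemma natFun_comp {m₁ m₂ m₃ : ℕ} (u : ⦋m₁⦌ ⟶ ⦋m₂⦌) (v : ⦋m₂⦌ ⟶ ⦋m₃⦌) {a : ℕ} (ha : a ≤ m₁) :
    natFun (u ≫ v) a = natFun v (natFun u a) := by
  rw [natFun_of_le _ ha, natFun_of_le v (natFun_le u a), comp_apply_val]
  exact congrArg (fun x => (v.toOrderHom x).val) (Fin.ext (natFun_of_le u ha).symm)

lemma natFun_δ {p : ℕ} (i : Fin (p + 2)) {a : ℕ} (ha : a ≤ p) :
    natFun (SimplexCategory.δ i) a = fc i.val a := by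
  rw [natFun_of_le _ ha]
  change (i.succAbove ⟨a, _⟩).val = _
  simp only [Fin.succAbove, fc, Fin.lt_def, Fin.val_castSucc]
  split_ifs <;> simp

lemma natFun_σ {p : ℕ} (i : Fin (p + 1)) {a : ℕ} (ha : a ≤ p + 1) :
    natFun (SimplexCategory.σ i) a = dgm i.val a := by
  rw [natFun_of_le _ ha]
  change (i.predAbove ⟨a, _⟩).val = _
  simp only [Fin.predAbove, dgm, Fin.lt_def, Fin.val_castSucc]
  split_ifs <;> simp <;> omega

variable (S : BiSSet)

lemma hAct_id {p q : ℕ} (x : S.obj2 p q) : S.hAct (𝟙 _) x = x := by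
  change (S.map (𝟙 _).op).app _ x = x
  rw [op_id, S.map_id]
  rfl

lemma vAct_id {p q : ℕ} (x : S.obj2 p q) : S.vAct (𝟙 _) x = x :=
  (S.obj _).map_id_apply _ x

lemma hAct_hAct {p₁ p₂ p₃ q : ℕ} (f : ⦋p₁⦌ ⟶ ⦋p₂⦌) (g : ⦋p₂⦌ ⟶ ⦋p₃⦌) (x : S.obj2 p₃ q) :
    S.hAct f (S.hAct g x) = S.hAct (f ≫ g) x := by
  change _ = (S.map (f ≫ g).op).app _ x
  rw [op_comp, S.map_comp]
  rfl

lemma vAct_vAct {p q₁ q₂ q₃ : ℕ} (f : ⦋q₁⦌ ⟶ ⦋q₂⦌) (g : ⦋q₂⦌ ⟶ ⦋q₃⦌) (x : S.obj2 p q₃) :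
    S.vAct f (S.vAct g x) = S.vAct (f ≫ g) x :=
  ((S.obj _).map_comp_apply _ _ x).symm

lemma hAct_vAct {p p' q q' : ℕ} (f : ⦋p'⦌ ⟶ ⦋p⦌) (g : ⦋q'⦌ ⟶ ⦋q⦌) (x : S.obj2 p q) :
    S.hAct f (S.vAct g x) = S.vAct g (S.hAct f x) :=
  NatTrans.naturality_apply (S.map f.op) g.op x

lemma hAct_ocast {p p' q q' : ℕ} (f : ⦋p'⦌ ⟶ ⦋p⦌) (hq : q = q') (x : S.obj2 p q) :
    S.hAct f (S.ocast rfl hq x) = S.ocast rfl hq (S.hAct f x) := by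
  subst hq
  rfl

lemma hAct_of_apply_val {p q : ℕ} (g : ⦋p⦌ ⟶ ⦋p⦌)
    (hg : ∀ i : Fin (p + 1), (g.toOrderHom i).val = i.val) (x : S.obj2 p q) : S.hAct g x = x := by
  rw [show g = 𝟙 _ from hom_ext_val hg, hAct_id]

lemma vAct_of_apply_val {p q q' : ℕ} (g : ⦋q'⦌ ⟶ ⦋q⦌) (h : q = q')
    (hg : ∀ i : Fin (q' + 1), (g.toOrderHom i).val = i.val) (x : S.obj2 p q) :
    S.vAct g x = S.ocast rfl h x := by
  subst h
  rw [show g = 𝟙 _ from hom_ext_val hg, vAct_id]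
  rfl

def headHom {m n : ℕ} (α : ⦋m⦌ ⟶ ⦋n⦌) (j : ℕ) : ⦋j⦌ ⟶ ⦋natFun α j⦌ :=
  arr j (natFun α j) (natFun α) (natFun_mono α)

def tailHom {m n : ℕ} (α : ⦋m⦌ ⟶ ⦋n⦌) (j : ℕ) : ⦋m - j⦌ ⟶ ⦋n - natFun α j⦌ :=
  arr (m - j) (n - natFun α j) (fun a => natFun α (j + a) - natFun α j)
    fun ⦃_ _⦄ h => Nat.sub_le_sub_right (natFun_mono α (Nat.add_le_add_left h j)) _

@[simp]
lemma headHom_apply_val {m n : ℕ} (α : ⦋m⦌ ⟶ ⦋n⦌) (j : ℕ) (i : Fin (j + 1)) :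
    ((headHom α j).toOrderHom i).val = min (natFun α i.val) (natFun α j) :=
  rfl

@[simp]
lemma tailHom_apply_val {m n : ℕ} (α : ⦋m⦌ ⟶ ⦋n⦌) (j : ℕ) (i : Fin (m - j + 1)) :
    ((tailHom α j).toOrderHom i).val = min (natFun α (j + i.val) - natFun α j) (n - natFun α j) :=
  rfl

def mapTuple {m n : ℕ} (α : ⦋m⦌ ⟶ ⦋n⦌) (t : S.Wbar n) (j : Fin (m + 1)) :
    S.obj2 j.val (m - j.val) :=
  S.hAct (headHom α j.val)
    (S.vAct (tailHom α j.val) (t.1 ⟨natFun α j.val, Nat.lt_succ_of_le (natFun_le α _)⟩))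

lemma mapTuple_eq {m n : ℕ} (α : ⦋m⦌ ⟶ ⦋n⦌) (t : S.Wbar n) (j : Fin (m + 1)) {k : ℕ}
    (hk : natFun α j.val = k) (f : ⦋j.val⦌ ⟶ ⦋k⦌) (g : ⦋m - j.val⦌ ⟶ ⦋n - k⦌)
    (hf : ∀ i : Fin (j.val + 1), (f.toOrderHom i).val = natFun α i.val)
    (hg : ∀ i : Fin (m - j.val + 1), (g.toOrderHom i).val = natFun α (j.val + i.val) - k) :
    S.mapTuple α t j = S.hAct f (S.vAct g (t.1 ⟨k, hk ▸ Nat.lt_succ_of_le (natFun_le α _)⟩)) := by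
  subst hk
  have hf' : headHom α j.val = f := hom_ext_val fun i => by
    have := natFun_mono α (Nat.le_of_lt_succ i.isLt)
    rw [headHom_apply_val, hf]
    omega
  have hg' : tailHom α j.val = g := hom_ext_val fun i => by
    have := natFun_le α (j.val + i.val)
    rw [tailHom_apply_val, hg]
    omega
  rw [mapTuple, hf', hg']

lemma mapTuple_of_natFun_eq_self {m n : ℕ} (α : ⦋m⦌ ⟶ ⦋n⦌) (t : S.Wbar n) (j : Fin (m + 1))
    (hj : j.val ≤ n) (hfix : ∀ a ≤ j.val, natFun α a = a) (g : ⦋m - j.val⦌ ⟶ ⦋n - j.val⦌)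
    (hg : ∀ i : Fin (m - j.val + 1), (g.toOrderHom i).val = natFun α (j.val + i.val) - j.val) :
    S.mapTuple α t j = S.vAct g (t.1 ⟨j.val, Nat.lt_succ_of_le hj⟩) := by
  rw [S.mapTuple_eq α t j (hfix j.val le_rfl) (𝟙 _) g
    (fun i => (hfix i.val (Nat.le_of_lt_succ i.isLt)).symm) hg, hAct_id]

lemma mapTuple_of_natFun_eq_add {m n : ℕ} (α : ⦋m⦌ ⟶ ⦋n⦌) (t : S.Wbar n) (j : Fin (m + 1))
    {k : ℕ} (hk : k ≤ n) (hdim : n - k = m - j.val)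
    (hshift : ∀ a ≤ m - j.val, natFun α (j.val + a) = k + a) (f : ⦋j.val⦌ ⟶ ⦋k⦌)
    (hf : ∀ i : Fin (j.val + 1), (f.toOrderHom i).val = natFun α i.val) :
    S.mapTuple α t j = S.ocast rfl hdim (S.hAct f (t.1 ⟨k, Nat.lt_succ_of_le hk⟩)) := by
  rw [S.mapTuple_eq α t j (by simpa using hshift 0 (Nat.zero_le _)) f (incl _ _) hf
    (fun i => by rw [incl_apply_val, hshift i.val (Nat.le_of_lt_succ i.isLt)]; omega),
    S.vAct_of_apply_val _ hdim (fun i => by rw [incl_apply_val]; omega), hAct_ocast]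

lemma vAct_shift_eq_hAct_incl {n : ℕ} (t : S.Wbar n) {k k' : ℕ} (hk : k ≤ k') (hk' : k' ≤ n) :
    S.vAct (shift (k' - k) (n - k') (n - k)) (t.1 ⟨k, by omega⟩)
      = S.hAct (incl k k') (t.1 ⟨k', Nat.lt_succ_of_le hk'⟩) := by
  induction hk using Nat.decreasingInduction with
  | self =>
    rw [S.vAct_of_apply_val _ rfl (fun i => by rw [shift_apply_val]; omega),
      S.hAct_of_apply_val _ (fun i => by rw [incl_apply_val]; omega)]
    rfl
  | of_succ k hk ih =>
    have hmatch : S.vAct (arr (n - (k + 1)) (n - k) (fc 0) (fc_mono 0)) (t.1 ⟨k, by omega⟩)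
        = S.hAct (arr k (k + 1) (fc (k + 1)) (fc_mono _)) (t.1 ⟨k + 1, by omega⟩) :=
      t.2 ⟨k, by omega⟩
    have hshift : shift (k' - k) (n - k') (n - k)
        = shift (k' - (k + 1)) (n - k') (n - (k + 1)) ≫ arr _ _ (fc 0) (fc_mono 0) :=
      hom_ext_val fun i => by
        have := i.isLt
        simp only [shift_apply_val, comp_apply_val, arr_apply_val, fc, Nat.not_lt_zero, if_false]
        omega
    have hincl : arr k (k + 1) (fc (k + 1)) (fc_mono _) ≫ incl (k + 1) k' = incl k k' :=
      hom_ext_val fun i => by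
        have := i.isLt
        simp only [incl_apply_val, comp_apply_val, arr_apply_val, fc]
        split_ifs
        omega
    rw [hshift, ← S.vAct_vAct, hmatch, ← S.hAct_vAct, ih, S.hAct_hAct, hincl]

lemma mapTuple_succ {m n : ℕ} (α : ⦋m⦌ ⟶ ⦋n⦌) (t : S.Wbar n) (j : Fin m) :
    S.dv 0 (S.mapTuple α t j.castSucc) = S.dh (j.val + 1) (S.mapTuple α t j.succ) := by
  have hmono : natFun α j ≤ natFun α (j + 1) := natFun_mono α (Nat.le_succ _)
  have hle : natFun α (j + 1) ≤ n := natFun_le α _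
  have htail : arr (m - (j + 1)) (m - j) (fc 0) (fc_mono 0) ≫ tailHom α j
      = tailHom α (j + 1) ≫ shift (natFun α (j + 1) - natFun α j) (n - natFun α (j + 1))
          (n - natFun α j) := hom_ext_val fun i => by
    have := natFun_mono α (Nat.le_add_right (j + 1) i)
    have := natFun_le α (j + 1 + i)
    simp only [comp_apply_val, tailHom_apply_val, arr_apply_val, shift_apply_val, fc,
      Nat.not_lt_zero, if_false]
    rw [show j.val + min (i.val + 1) (m - j.val) = j.val + 1 + i.val by omega]
    omega
  have hhead : headHom α j ≫ incl (natFun α j) (natFun α (j + 1))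
      = arr j (j + 1) (fc (j + 1)) (fc_mono _) ≫ headHom α (j + 1) := hom_ext_val fun i => by
    have := natFun_mono α (Nat.le_of_lt_succ i.isLt)
    simp only [comp_apply_val, headHom_apply_val, incl_apply_val, arr_apply_val, fc]
    rw [if_pos (by omega), min_eq_left (by omega : i.val ≤ j.val + 1)]
    omega
  change S.vAct (arr (m - (j + 1)) (m - j) (fc 0) (fc_mono 0)) (S.hAct (headHom α j)
      (S.vAct (tailHom α j) (t.1 ⟨natFun α j, Nat.lt_succ_of_le (natFun_le α _)⟩)))
    = S.hAct (arr j (j + 1) (fc (j + 1)) (fc_mono _)) (S.hAct (headHom α (j + 1))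
      (S.vAct (tailHom α (j + 1)) (t.1 ⟨natFun α (j + 1), Nat.lt_succ_of_le hle⟩)))
  rw [← S.hAct_vAct, S.vAct_vAct, htail, ← S.vAct_vAct, S.vAct_shift_eq_hAct_incl t hmono hle,
    ← S.hAct_vAct, S.hAct_hAct, S.hAct_hAct, hhead]

def wmap {m n : ℕ} (α : ⦋m⦌ ⟶ ⦋n⦌) (t : S.Wbar n) : S.Wbar m :=
  ⟨S.mapTuple α t, S.mapTuple_succ α t⟩

lemma wmap_id {n : ℕ} (t : S.Wbar n) : S.wmap (𝟙 ⦋n⦌) t = t := by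
  refine Subtype.ext (funext fun j => ?_)
  have hj := Nat.le_of_lt_succ j.isLt
  change S.mapTuple _ t j = t.1 j
  rw [S.mapTuple_of_natFun_eq_self _ t j hj (fun a ha => natFun_id (ha.trans hj)) (𝟙 _)
    (fun i => by rw [natFun_id (by omega)]; simp), vAct_id]

lemma wmap_comp {m₁ m₂ m₃ : ℕ} (u : ⦋m₁⦌ ⟶ ⦋m₂⦌) (v : ⦋m₂⦌ ⟶ ⦋m₃⦌) (t : S.Wbar m₃) :
    S.wmap (u ≫ v) t = S.wmap u (S.wmap v t) := by
  refine Subtype.ext (funext fun j => ?_)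
  have hj := Nat.le_of_lt_succ j.isLt
  change S.mapTuple (u ≫ v) t j = S.hAct (headHom u j) (S.vAct (tailHom u j)
    (S.hAct (headHom v (natFun u j)) (S.vAct (tailHom v (natFun u j)) _)))
  rw [S.mapTuple_eq (u ≫ v) t j (natFun_comp u v hj) (headHom u j ≫ headHom v _)
    (tailHom u j ≫ tailHom v _) (fun i => ?_) (fun i => ?_), ← S.hAct_hAct, ← S.vAct_vAct,
    S.hAct_vAct (headHom v _)]
  · have hu := natFun_mono u (Nat.le_of_lt_succ i.isLt)
    simp only [comp_apply_val, headHom_apply_val]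
    rw [natFun_comp u v (by omega), min_eq_left hu, min_eq_left (natFun_mono v hu)]
  · have hu := natFun_mono u (Nat.le_add_right j i)
    have hu' := natFun_le u (j + i)
    simp only [comp_apply_val, tailHom_apply_val]
    rw [natFun_comp u v (by omega), min_eq_left (Nat.sub_le_sub_right hu' _),
      Nat.add_sub_cancel' hu, min_eq_left (Nat.sub_le_sub_right (natFun_le v _) _)]

def codiagonal : SSet.{0} where
  obj X := S.Wbar X.unop.len
  map f := TypeCat.ofHom (S.wmap f.unop)
  map_id _ := by ext t; exact S.wmap_id t
  map_comp f g := by ext t; exact S.wmap_comp g.unop f.unop t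

lemma wmap_δ {p : ℕ} (i : Fin (p + 2)) (t : S.Wbar (p + 1)) :
    (S.wmap (SimplexCategory.δ i) t).1 = S.wFaceTuple i.val t := by
  funext j
  have hj := Nat.le_of_lt_succ j.isLt
  change S.mapTuple _ t j = _
  rw [wFaceTuple]
  split_ifs with h
  · refine S.mapTuple_of_natFun_eq_self _ t j (by omega)
      (fun a ha => by rw [natFun_δ i (by omega), fc, if_pos (by omega)]) _ fun a => ?_
    rw [arr_apply_val, natFun_δ i (by omega)]
    simp only [fc]
    split_ifs <;> omega
  · refine S.mapTuple_of_natFun_eq_add _ t j (by omega) _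
      (fun a ha => by rw [natFun_δ i (by omega), fc, if_neg (by omega)]; omega) _ fun a => ?_
    rw [arr_apply_val, natFun_δ i (by omega)]
    simp only [fc]
    split_ifs <;> omega

lemma wmap_σ {p : ℕ} (i : Fin (p + 1)) (t : S.Wbar p) :
    (S.wmap (SimplexCategory.σ i) t).1 = S.wDegTuple i.val i.is_le t := by
  funext j
  have hj := Nat.le_of_lt_succ j.isLt
  change S.mapTuple _ t j = _
  rw [wDegTuple]
  split_ifs with h
  · refine S.mapTuple_of_natFun_eq_self _ t j (by omega)
      (fun a ha => by rw [natFun_σ i (by omega), dgm, if_pos (by omega)]) _ fun a => ?_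
    rw [arr_apply_val, natFun_σ i (by omega)]
    simp only [dgm]
    split_ifs <;> omega
  · refine S.mapTuple_of_natFun_eq_add _ t j (by omega) _
      (fun a ha => by rw [natFun_σ i (by omega), dgm, if_neg (by omega)]; omega) _ fun a => ?_
    rw [arr_apply_val, natFun_σ i (by omega)]
    simp only [dgm]
    split_ifs <;> omega

end BiSSet

/-- For a bisimplicial set `S`, the family `W̄S_p`, equipped with the
described faces and degeneracies, forms a simplicial set: there is a simplicial set
whose `p`-simplices are naturally identified with `W̄S_p`, and whose face and degeneracy
operators are given by the described formulas. -/
theorem wbar_forms_simplicial_set (S : BiSSet) :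
    ∃ (W : SSet.{0}) (e : ∀ p : ℕ, W.obj (op (SimplexCategory.mk p)) ≃ S.Wbar p),
      (∀ (p : ℕ) (i : Fin (p + 2)) (x : W.obj (op (SimplexCategory.mk (p + 1)))),
        ((e p) (W.map (SimplexCategory.δ i).op x)).1 =
          S.wFaceTuple i.val (e (p + 1) x)) ∧
      (∀ (p : ℕ) (i : Fin (p + 1)) (x : W.obj (op (SimplexCategory.mk p))),
        ((e (p + 1)) (W.map (SimplexCategory.σ i).op x)).1 =
          S.wDegTuple i.val i.is_le (e p x)) :=
  ⟨S.codiagonal, fun _ => Equiv.refl _, fun _ i x => S.wmap_δ i x, fun _ i x => S.wmap_σ i x⟩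
end

section
/- Let M: I^op → MonCat be a diagram of monoidal categories, with (a: j → i) ↦ (a*: M_i → M_j). The nerve of the diagram, Ner_I M: [n] ↦ ∐_{G:[n]→I} Z²([n], M∘G), where Z²([n], M∘G) is the set of 2-cocycles of [n] with coefficients in M∘G, is a well-defined simplicial set. -/
/-!
STATEMENT 7: For a diagram of monoidal categories `M : Iᵒᵖ → MonCat`, the nerve of the
diagram `Ner_I M : [n] ↦ ∐_{G : [n] → I} Z²([n], M ∘ G)` is a well-defined simplicial
set.  A functor `G : [n] → I` (with `[n]` the ordinal category with an arrow `j → i`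
for `i ≤ j`) is encoded as a functor `Fin (n+1) ⥤ Iᵒᵖ`; the diagram of monoidal
categories is encoded as a functor `M : Iᵒᵖ ⥤ Cat` each of whose values is monoidal
and each of whose transition functors is (strong) monoidal.
-/

open CategoryTheory Opposite MonoidalCategory

variable {I : Type} [SmallCategory I]

/-- For a diagram `M` of monoidal categories indexed by `Iᵒᵖ` and a functor
`G : [n] → I` (encoded as `Fin (n+1) ⥤ Iᵒᵖ`), the composite of transition functors
along `i ≤ j ≤ k` agrees, on objects, with the transition functor of `i ≤ k`. -/
lemma tfun_comp_obj (M : Iᵒᵖ ⥤ Cat.{0, 0}) {n : ℕ} (G : Fin (n + 1) ⥤ Iᵒᵖ)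
    {i j k : Fin (n + 1)} (hij : i ≤ j) (hjk : j ≤ k) (X : M.obj (G.obj i)) :
    (M.map (G.map (homOfLE hjk))).toFunctor.obj ((M.map (G.map (homOfLE hij))).toFunctor.obj X) =
      (M.map (G.map (homOfLE (hij.trans hjk)))).toFunctor.obj X := by
  rw [← homOfLE_comp hij hjk, G.map_comp, M.map_comp]
  rfl

/-- The transition functor of `i ≤ i` is the identity on objects. -/
lemma tfun_refl_obj (M : Iᵒᵖ ⥤ Cat.{0, 0}) {n : ℕ} (G : Fin (n + 1) ⥤ Iᵒᵖ)
    (i : Fin (n + 1)) (X : M.obj (G.obj i)) :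
    (M.map (G.map (homOfLE (le_refl i)))).toFunctor.obj X = X := by
  have h : homOfLE (le_refl i) = 𝟙 i := rfl
  rw [h, G.map_id, M.map_id]
  rfl

/-- A 2-cocycle of `[n]` with coefficients in the diagram of monoidal categories
`M ∘ G`. -/
structure TwoCocycle (M : Iᵒᵖ ⥤ Cat.{0, 0}) [∀ x, MonoidalCategory (M.obj x)]
    [∀ (x y : Iᵒᵖ) (f : x ⟶ y), (M.map f).toFunctor.Monoidal]
    {n : ℕ} (G : Fin (n + 1) ⥤ Iᵒᵖ) where
  /-- the object `Y_a ∈ M_j` associated with each arrow `a : j → i` -/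
  Y : ∀ {i j : Fin (n + 1)}, i ≤ j → M.obj (G.obj j)
  /-- the morphism `f_{a,b} : b^*Y_a ⊗ Y_b ⟶ Y_{ab}` -/
  f : ∀ {i j k : Fin (n + 1)} (hij : i ≤ j) (hjk : j ≤ k),
    ((M.map (G.map (homOfLE hjk))).toFunctor.obj (Y hij) ⊗ Y hjk) ⟶ Y (hij.trans hjk)
  /-- normalization: `Y_{1_j} = I` -/
  Y_unit : ∀ i : Fin (n + 1), Y (le_refl i) = 𝟙_ (M.obj (G.obj i))
  /-- `f_{a,1}` is the canonical isomorphism -/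
  f_right : ∀ {i j : Fin (n + 1)} (hij : i ≤ j),
    f hij (le_refl j) =
      eqToHom (by rw [tfun_refl_obj, Y_unit]) ≫ (ρ_ (Y hij)).hom
  /-- `f_{1,a}` is the canonical isomorphism -/
  f_left : ∀ {i j : Fin (n + 1)} (hij : i ≤ j),
    f (le_refl i) hij =
      ((eqToHom (congrArg (M.map (G.map (homOfLE hij))).toFunctor.obj (Y_unit i)) ≫
        Functor.OplaxMonoidal.η (M.map (G.map (homOfLE hij))).toFunctor) ▷ Y hij) ≫
        (λ_ (Y hij)).hom
  /-- the cocycle coherence condition -/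
  coh : ∀ {i j k l : Fin (n + 1)} (hij : i ≤ j) (hjk : j ≤ k) (hkl : k ≤ l),
    (Functor.LaxMonoidal.μ (M.map (G.map (homOfLE hkl))).toFunctor
        ((M.map (G.map (homOfLE hjk))).toFunctor.obj (Y hij)) (Y hjk) ▷ Y hkl) ≫
      ((M.map (G.map (homOfLE hkl))).toFunctor.map (f hij hjk) ▷ Y hkl) ≫
      f (hij.trans hjk) hkl =
    (α_ ((M.map (G.map (homOfLE hkl))).toFunctor.obj ((M.map (G.map (homOfLE hjk))).toFunctor.obj (Y hij)))
        ((M.map (G.map (homOfLE hkl))).toFunctor.obj (Y hjk)) (Y hkl)).hom ≫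
      (((M.map (G.map (homOfLE hkl))).toFunctor.obj ((M.map (G.map (homOfLE hjk))).toFunctor.obj (Y hij))) ◁
        f hjk hkl) ≫
      (eqToHom (tfun_comp_obj M G hjk hkl (Y hij)) ▷ Y (hjk.trans hkl)) ≫
      f hij (hjk.trans hkl)

namespace TwoCocycle

variable {M : Iᵒᵖ ⥤ Cat.{0, 0}} [∀ x, MonoidalCategory (M.obj x)]
  [∀ (x y : Iᵒᵖ) (f : x ⟶ y), (M.map f).toFunctor.Monoidal]

/-- Precomposition (pullback) of a 2-cocycle along a monotone map. -/
def pull {m n : ℕ} (α : Fin (m + 1) →o Fin (n + 1)) {G : Fin (n + 1) ⥤ Iᵒᵖ}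
    (c : TwoCocycle M G) : TwoCocycle M (α.monotone.functor ⋙ G) where
  Y h := c.Y (α.monotone h)
  f hij hjk := c.f (α.monotone hij) (α.monotone hjk)
  Y_unit i := c.Y_unit (α i)
  f_right _ := c.f_right _
  f_left _ := c.f_left _
  coh _ _ _ := c.coh _ _ _

end TwoCocycle

namespace TwoCocycle

variable (M : Iᵒᵖ ⥤ Cat.{0, 0}) [∀ x, MonoidalCategory (M.obj x)]
  [∀ (x y : Iᵒᵖ) (f : x ⟶ y), (M.map f).toFunctor.Monoidal]

/-- `map_id` and `map_comp` hold by `rfl`: pulling back along `𝟙` or along a composite only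
changes the proofs of `≤` that index the cocycle data, and these are proof-irrelevant. -/
def nerve : SSet.{0} where
  obj x := Σ G : Fin (x.unop.len + 1) ⥤ Iᵒᵖ, TwoCocycle M G
  map α := TypeCat.ofHom fun s =>
    ⟨α.unop.toOrderHom.monotone.functor ⋙ s.1, s.2.pull α.unop.toOrderHom⟩
  map_id _ := rfl
  map_comp _ _ := rfl

end TwoCocycle

/-- The nerve of a diagram of monoidal categories,
`[n] ↦ ∐_{G : [n] → I} Z²([n], M ∘ G)`, is a well-defined simplicial set, with the
simplicial operators acting by precomposition on `G` and by pullback on the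
2-cocycle. -/
theorem nerve_of_diagram_of_monoidal_categories
    (I : Type) [SmallCategory I] (M : Iᵒᵖ ⥤ Cat.{0, 0})
    [∀ x, MonoidalCategory (M.obj x)]
    [∀ (x y : Iᵒᵖ) (f : x ⟶ y), (M.map f).toFunctor.Monoidal] :
    ∃ (N : SSet.{0})
      (e : ∀ n : ℕ, N.obj (op (SimplexCategory.mk n)) ≃
        Σ G : Fin (n + 1) ⥤ Iᵒᵖ, TwoCocycle M G),
      ∀ (m n : ℕ) (α : SimplexCategory.mk m ⟶ SimplexCategory.mk n)
        (x : N.obj (op (SimplexCategory.mk n))),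
        ((e m) (N.map α.op x)).1 = α.toOrderHom.monotone.functor ⋙ ((e n) x).1 ∧
        HEq ((e m) (N.map α.op x)).2 (((e n) x).2.pull α.toOrderHom) :=
  ⟨TwoCocycle.nerve M, fun _ => Equiv.refl _, fun _ _ _ _ => ⟨rfl, HEq.rfl⟩⟩
end
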